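/- Let g satisfy the Orlicz structure conditions with indices 1 ≤ i_g ≤ s_g < ∞ and define V_g : ℝⁿ → ℝⁿ by V_g(z) = (g(|z|)/|z|)^{1/2}·z for z ≠ 0 and V_g(0) = 0. Then there exist constants 0 < c₁ ≤ c₂, depending only on n, i_g and s_g, such that for all z₁, z₂ ∈ ℝⁿ not both zero: c₁·(g(|z₁|+|z₂|)/(|z₁|+|z₂|))·|z₁−z₂|² ≤ |V_g(z₁) − V_g(z₂)|² ≤ c₂·(g(|z₁|+|z₂|)/(|z₁|+|z₂|))·|z₁−z₂|². -/

import Mathlib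

open Real Set

/-!
Write `φ(t) = √(g t / t)`, so that `V_g z = φ(|z|) z`, and let `a = |z₁| ≥ b = |z₂|`. The two
index conditions say that `g t / t` is nondecreasing and `g t / t ^ s_g` is nonincreasing.
The first gives `φ(b) ≤ φ(a)` and `φ(a)² ≤ g(a + b)/(a + b)`; the second, through Bernoulli's
inequality, bounds the variation `(φ(a) - φ(b)) b ≤ (s_g - 1) φ(a) (a - b)`, and also makes
`g(a + b)/(a + b)` at most `3 ^ s_g` times `φ(a)²`, and times `φ(b)²` when `2b > a`.
Writing `φ(a) z₁ - φ(b) z₂ = φ(a) (z₁ - z₂) + (φ(a) - φ(b)) z₂` gives the upper bound.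
For the lower bound, `|αx - βy| ≥ β |x - y|` whenever `α ≥ β ≥ 0` and `|y| ≤ |x|`, which
settles the case `2b > a`, while for `2b ≤ a` one uses `|φ(a) z₁ - φ(b) z₂| ≥ φ(a) (a - b)`
and `|z₁ - z₂| ≤ 3 (a - b)`.
-/

theorem sub_rpow_le_sub_one_mul_one_sub {s x : ℝ} (hs : 1 ≤ s) (hx : 0 ≤ x) :
    x - x ^ s ≤ (s - 1) * (1 - x) := by
  have h := one_add_mul_self_le_rpow_one_add (s := x - 1) (by linarith) hs
  rw [add_sub_cancel] at h
  linarith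

section GrowthIndices

variable {g g' : ℝ → ℝ} {s : ℝ}

theorem monotoneOn_div_self_of_le_mul_deriv (hg : ∀ t, 0 < t → HasDerivAt g (g' t) t)
    (h : ∀ t, 0 < t → g t ≤ t * g' t) : MonotoneOn (fun t => g t / t) (Ioi 0) := by
  have hd : ∀ t ∈ Ioi (0 : ℝ), HasDerivAt (fun t => g t / t) ((g' t * t - g t * 1) / t ^ 2) t :=
    fun t ht => (hg t ht).div (hasDerivAt_id t) (ne_of_gt ht)
  refine monotoneOn_of_hasDerivWithinAt_nonneg (f' := fun t => (g' t * t - g t * 1) / t ^ 2)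
    (convex_Ioi 0)
    (fun t ht => (hd t ht).continuousAt.continuousWithinAt) (fun t ht => ?_) (fun t ht => ?_)
  · rw [interior_Ioi] at ht
    exact (hd t ht).hasDerivWithinAt
  · rw [interior_Ioi] at ht
    have := h t ht
    exact div_nonneg (by linarith) (sq_nonneg t)

theorem antitoneOn_div_rpow_of_mul_deriv_le (hg : ∀ t, 0 < t → HasDerivAt g (g' t) t)
    (h : ∀ t, 0 < t → t * g' t ≤ s * g t) : AntitoneOn (fun t => g t / t ^ s) (Ioi 0) := by
  have hd : ∀ t ∈ Ioi (0 : ℝ), HasDerivAt (fun t => g t / t ^ s)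
      ((g' t * t ^ s - g t * (s * t ^ (s - 1))) / (t ^ s) ^ 2) t :=
    fun t ht => (hg t ht).div (hasDerivAt_rpow_const (Or.inl (ne_of_gt ht)))
      (rpow_pos_of_pos ht s).ne'
  refine antitoneOn_of_hasDerivWithinAt_nonpos
    (f' := fun t => (g' t * t ^ s - g t * (s * t ^ (s - 1))) / (t ^ s) ^ 2) (convex_Ioi 0)
    (fun t ht => (hd t ht).continuousAt.continuousWithinAt) (fun t ht => ?_) (fun t ht => ?_)
  · rw [interior_Ioi] at ht
    exact (hd t ht).hasDerivWithinAt
  · rw [interior_Ioi] at ht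
    have hts : t ^ s = t ^ (s - 1) * t := by rw [← rpow_add_one (ne_of_gt ht), sub_add_cancel]
    have := mul_nonneg (rpow_nonneg ht.le (s - 1)) (sub_nonneg.2 (h t ht))
    refine div_nonpos_of_nonpos_of_nonneg ?_ (sq_nonneg _)
    rw [hts]
    linarith

theorem le_rpow_div_mul_of_antitoneOn (hanti : AntitoneOn (fun t => g t / t ^ s) (Ioi 0))
    {u v : ℝ} (hu : 0 < u) (huv : u ≤ v) : g v ≤ (v / u) ^ s * g u := by
  have hv : 0 < v := hu.trans_le huv
  have h := hanti (mem_Ioi.2 hu) (mem_Ioi.2 hv) huv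
  rw [div_le_div_iff₀ (rpow_pos_of_pos hv s) (rpow_pos_of_pos hu s)] at h
  rw [div_rpow hv.le hu.le, div_mul_eq_mul_div, le_div_iff₀ (rpow_pos_of_pos hu s)]
  linarith

theorem div_le_rpow_mul_div_of_antitoneOn (hs : 0 ≤ s) (hg : ∀ t, 0 < t → 0 ≤ g t)
    (hanti : AntitoneOn (fun t => g t / t ^ s) (Ioi 0)) {c t k : ℝ} (hc : 0 < c) (hct : c ≤ t)
    (htk : t ≤ k * c) : g t / t ≤ k ^ s * (g c / c) := by
  have hgt := le_rpow_div_mul_of_antitoneOn hanti hc hct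
  have hk : (t / c) ^ s ≤ k ^ s :=
    rpow_le_rpow (div_nonneg (hc.le.trans hct) hc.le) ((div_le_iff₀ hc).2 htk) hs
  calc g t / t ≤ g t / c := div_le_div_of_nonneg_left (hg t (hc.trans_le hct)) hc hct
    _ ≤ k ^ s * g c / c := by gcongr; exact hgt.trans (by gcongr; exact hg c hc)
    _ = k ^ s * (g c / c) := mul_div_assoc _ _ _

theorem sqrt_div_le_sqrt_div_of_monotoneOn (hmono : MonotoneOn (fun t => g t / t) (Ioi 0))
    {a b : ℝ} (hb : 0 ≤ b) (hba : b ≤ a) :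
    √(g b / b) ≤ √(g a / a) := by
  rcases hb.eq_or_lt with rfl | hb
  · simp
  · exact sqrt_le_sqrt (hmono hb (hb.trans_le hba) hba)

theorem sqrt_div_sub_sqrt_div_mul_le (hs : 1 ≤ s)
    (hg : ∀ t, 0 < t → 0 ≤ g t) (hmono : MonotoneOn (fun t => g t / t) (Ioi 0))
    (hanti : AntitoneOn (fun t => g t / t ^ s) (Ioi 0)) {a b : ℝ} (ha : 0 < a) (hb : 0 ≤ b)
    (hba : b ≤ a) :
    (√(g a / a) - √(g b / b)) * b ≤ (s - 1) * √(g a / a) * (a - b) := by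
  have hφa0 : 0 ≤ √(g a / a) := sqrt_nonneg _
  have hs1 : 0 ≤ s - 1 := by linarith
  have hφ := sqrt_div_le_sqrt_div_of_monotoneOn hmono hb hba
  rcases hb.eq_or_lt with rfl | hb
  · simpa using mul_nonneg (mul_nonneg hs1 hφa0) ha.le
  rcases hφa0.eq_or_lt with hφa | hφa
  · have : √(g b / b) = 0 := le_antisymm (hφ.trans hφa.symm.le) (sqrt_nonneg _)
    simp [← hφa, this]
  have hga := hg a ha
  have hgb : (b / a) ^ s * g a ≤ g b := by
    have h := le_rpow_div_mul_of_antitoneOn hanti hb hba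
    calc (b / a) ^ s * g a ≤ (b / a) ^ s * ((a / b) ^ s * g b) := by gcongr
      _ = g b := by
        rw [← mul_assoc, ← mul_rpow (by positivity) (by positivity),
          div_mul_div_cancel₀ ha.ne', div_self hb.ne', one_rpow, one_mul]
  have hbern := sub_rpow_le_sub_one_mul_one_sub hs (x := b / a) (by positivity)
  have key : (√(g a / a) - √(g b / b)) * b * √(g a / a) ≤
      (s - 1) * √(g a / a) * (a - b) * √(g a / a) := by
    calc (√(g a / a) - √(g b / b)) * b * √(g a / a)
        ≤ (√(g a / a) ^ 2 - √(g b / b) ^ 2) * b := by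
          nlinarith [mul_nonneg (sqrt_nonneg (g b / b)) (sub_nonneg.2 hφ)]
      _ = g a * (b / a) - g b := by
          rw [sq_sqrt (div_nonneg hga ha.le), sq_sqrt (div_nonneg (hg b hb) hb.le)]
          field_simp
      _ ≤ g a * ((b / a) - (b / a) ^ s) := by linarith
      _ ≤ g a * ((s - 1) * (1 - b / a)) := by gcongr
      _ = (s - 1) * (g a / a) * (a - b) := by field_simp
      _ = (s - 1) * √(g a / a) * (a - b) * √(g a / a) := by
          linear_combination (-(s - 1) * (a - b)) * mul_self_sqrt (div_nonneg hga ha.le)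
  exact le_of_mul_le_mul_right key hφa

end GrowthIndices

section SmulSub

variable {E : Type*}

theorem mul_sub_norm_le_norm_smul_sub_smul [SeminormedAddCommGroup E] [NormedSpace ℝ E]
    {α β : ℝ} (hβ : 0 ≤ β) (hβα : β ≤ α) (x y : E) :
    α * (‖x‖ - ‖y‖) ≤ ‖α • x - β • y‖ := by
  have h := norm_sub_norm_le (α • x) (β • y)
  rw [norm_smul_of_nonneg (hβ.trans hβα), norm_smul_of_nonneg hβ] at h
  nlinarith [norm_nonneg y]

theorem norm_smul_sub_smul_le [SeminormedAddCommGroup E] [NormedSpace ℝ E]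
    {α β : ℝ} (hα : 0 ≤ α) (hβα : β ≤ α) (x y : E) :
    ‖α • x - β • y‖ ≤ α * ‖x - y‖ + (α - β) * ‖y‖ := by
  have h : α • x - β • y = α • (x - y) + (α - β) • y := by
    rw [smul_sub, sub_smul]; abel
  rw [h, ← norm_smul_of_nonneg hα, ← norm_smul_of_nonneg (sub_nonneg.2 hβα)]
  exact norm_add_le _ _

theorem mul_norm_sub_le_norm_smul_sub_smul [NormedAddCommGroup E] [InnerProductSpace ℝ E]
    {α β : ℝ} (hβ : 0 ≤ β) (hβα : β ≤ α) {x y : E} (hyx : ‖y‖ ≤ ‖x‖) :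
    β * ‖x - y‖ ≤ ‖α • x - β • y‖ := by
  refine (pow_le_pow_iff_left₀ (by positivity) (norm_nonneg _) two_ne_zero).1 ?_
  rw [mul_pow, norm_sub_sq_real, norm_sub_sq_real, norm_smul_of_nonneg (hβ.trans hβα),
    norm_smul_of_nonneg hβ, real_inner_smul_left, real_inner_smul_right]
  have hxy : inner ℝ x y ≤ ‖x‖ ^ 2 := (real_inner_le_norm x y).trans (by nlinarith [norm_nonneg y])
  -- the difference of the two sides is `(α - β) ((α + β) ‖x‖² - 2β⟪x, y⟫)`
  nlinarith [mul_nonneg (sub_nonneg.2 hβα) (mul_nonneg hβ (sub_nonneg.2 hxy)),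
    mul_nonneg (sub_nonneg.2 hβα) (mul_nonneg (sub_nonneg.2 hβα) (sq_nonneg ‖x‖))]

end SmulSub

section OrliczV

variable {E : Type*} {g : ℝ → ℝ} {s : ℝ}

noncomputable def orliczV [NormedAddCommGroup E] [NormedSpace ℝ E] (g : ℝ → ℝ) (z : E) : E :=
  √(g ‖z‖ / ‖z‖) • z

theorem norm_orliczV_sub_sq_le_of_norm_le [NormedAddCommGroup E] [NormedSpace ℝ E]
    (hs : 1 ≤ s) (hg : ∀ t, 0 < t → 0 ≤ g t) (hmono : MonotoneOn (fun t => g t / t) (Ioi 0))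
    (hanti : AntitoneOn (fun t => g t / t ^ s) (Ioi 0)) {x y : E} (hx : x ≠ 0)
    (hyx : ‖y‖ ≤ ‖x‖) :
    ‖orliczV g x - orliczV g y‖ ^ 2 ≤ s ^ 2 * (g (‖x‖ + ‖y‖) / (‖x‖ + ‖y‖)) * ‖x - y‖ ^ 2 := by
  have ha : 0 < ‖x‖ := norm_pos_iff.2 hx
  have hφ := sqrt_div_le_sqrt_div_of_monotoneOn hmono (norm_nonneg y) hyx
  have hφa : 0 ≤ √(g ‖x‖ / ‖x‖) := sqrt_nonneg _
  have hvar := sqrt_div_sub_sqrt_div_mul_le hs hg hmono hanti ha (norm_nonneg y) hyx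
  have hd : (s - 1) * √(g ‖x‖ / ‖x‖) * (‖x‖ - ‖y‖) ≤ (s - 1) * √(g ‖x‖ / ‖x‖) * ‖x - y‖ :=
    mul_le_mul_of_nonneg_left (norm_sub_norm_le x y) (mul_nonneg (by linarith) hφa)
  have hnorm : ‖orliczV g x - orliczV g y‖ ≤ s * √(g ‖x‖ / ‖x‖) * ‖x - y‖ := by
    have := norm_smul_sub_smul_le hφa hφ x y
    unfold orliczV
    nlinarith
  have hG : g ‖x‖ / ‖x‖ ≤ g (‖x‖ + ‖y‖) / (‖x‖ + ‖y‖) :=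
    hmono ha (add_pos_of_pos_of_nonneg ha (norm_nonneg y)) (le_add_of_nonneg_right (norm_nonneg y))
  calc ‖orliczV g x - orliczV g y‖ ^ 2 ≤ (s * √(g ‖x‖ / ‖x‖) * ‖x - y‖) ^ 2 :=
        pow_le_pow_left₀ (norm_nonneg _) hnorm 2
    _ = s ^ 2 * (g ‖x‖ / ‖x‖) * ‖x - y‖ ^ 2 := by
        rw [mul_pow, mul_pow, sq_sqrt (div_nonneg (hg _ ha) ha.le)]
    _ ≤ s ^ 2 * (g (‖x‖ + ‖y‖) / (‖x‖ + ‖y‖)) * ‖x - y‖ ^ 2 := by gcongr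

theorem le_norm_orliczV_sub_sq_of_norm_le [NormedAddCommGroup E] [InnerProductSpace ℝ E]
    (hs : 0 ≤ s) (hg : ∀ t, 0 < t → 0 ≤ g t) (hmono : MonotoneOn (fun t => g t / t) (Ioi 0))
    (hanti : AntitoneOn (fun t => g t / t ^ s) (Ioi 0)) {x y : E} (hx : x ≠ 0)
    (hyx : ‖y‖ ≤ ‖x‖) :
    (3 ^ s)⁻¹ / 9 * (g (‖x‖ + ‖y‖) / (‖x‖ + ‖y‖)) * ‖x - y‖ ^ 2 ≤
      ‖orliczV g x - orliczV g y‖ ^ 2 := by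
  have ha : 0 < ‖x‖ := norm_pos_iff.2 hx
  have hφ := sqrt_div_le_sqrt_div_of_monotoneOn hmono (norm_nonneg y) hyx
  have hd := norm_sub_le x y
  obtain ⟨φ, hφ0, hGφ, hφd⟩ : ∃ φ, 0 ≤ φ ∧ g (‖x‖ + ‖y‖) / (‖x‖ + ‖y‖) ≤ 3 ^ s * φ ^ 2 ∧
      φ * ‖x - y‖ ≤ 3 * ‖orliczV g x - orliczV g y‖ := by
    by_cases h2b : 2 * ‖y‖ ≤ ‖x‖
    · refine ⟨√(g ‖x‖ / ‖x‖), sqrt_nonneg _, ?_, ?_⟩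
      · rw [sq_sqrt (div_nonneg (hg _ ha) ha.le)]
        exact div_le_rpow_mul_div_of_antitoneOn hs hg hanti ha
          (le_add_of_nonneg_right (norm_nonneg y)) (by linarith)
      · have := mul_sub_norm_le_norm_smul_sub_smul (sqrt_nonneg _) hφ x y
        unfold orliczV
        nlinarith [sqrt_nonneg (g ‖x‖ / ‖x‖)]
    · have hb : 0 < ‖y‖ := by linarith
      refine ⟨√(g ‖y‖ / ‖y‖), sqrt_nonneg _, ?_, ?_⟩
      · rw [sq_sqrt (div_nonneg (hg _ hb) hb.le)]
        exact div_le_rpow_mul_div_of_antitoneOn hs hg hanti hb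
          (le_add_of_nonneg_left (norm_nonneg x)) (by linarith)
      · have := mul_norm_sub_le_norm_smul_sub_smul (sqrt_nonneg _) hφ hyx
        unfold orliczV
        linarith [norm_nonneg (√(g ‖x‖ / ‖x‖) • x - √(g ‖y‖ / ‖y‖) • y)]
  calc (3 ^ s)⁻¹ / 9 * (g (‖x‖ + ‖y‖) / (‖x‖ + ‖y‖)) * ‖x - y‖ ^ 2
      ≤ (3 ^ s)⁻¹ / 9 * (3 ^ s * φ ^ 2) * ‖x - y‖ ^ 2 := by gcongr
    _ = (φ * ‖x - y‖) ^ 2 / 9 := by field_simp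
    _ ≤ (3 * ‖orliczV g x - orliczV g y‖) ^ 2 / 9 := by gcongr
    _ = ‖orliczV g x - orliczV g y‖ ^ 2 := by ring

theorem orliczV_comparison [NormedAddCommGroup E] [InnerProductSpace ℝ E] (hs : 1 ≤ s)
    (hg : ∀ t, 0 < t → 0 ≤ g t) (hmono : MonotoneOn (fun t => g t / t) (Ioi 0))
    (hanti : AntitoneOn (fun t => g t / t ^ s) (Ioi 0)) {x y : E} (hxy : ¬(x = 0 ∧ y = 0)) :
    (3 ^ s)⁻¹ / 9 * (g (‖x‖ + ‖y‖) / (‖x‖ + ‖y‖)) * ‖x - y‖ ^ 2 ≤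
        ‖orliczV g x - orliczV g y‖ ^ 2 ∧
      ‖orliczV g x - orliczV g y‖ ^ 2 ≤ s ^ 2 * (g (‖x‖ + ‖y‖) / (‖x‖ + ‖y‖)) * ‖x - y‖ ^ 2 := by
  wlog hyx : ‖y‖ ≤ ‖x‖ generalizing x y
  · have := this (x := y) (y := x) (by tauto) (le_of_not_ge hyx)
    rwa [add_comm, norm_sub_rev y, norm_sub_rev (orliczV g y)] at this
  have hx : x ≠ 0 := fun hx => hxy ⟨hx, norm_le_zero_iff.1 (by simpa [hx] using hyx)⟩
  exact ⟨le_norm_orliczV_sub_sq_of_norm_le (by linarith) hg hmono hanti hx hyx,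
    norm_orliczV_sub_sq_le_of_norm_le hs hg hmono hanti hx hyx⟩

end OrliczV

theorem orlicz_Vg_comparison_general
    (n : ℕ)
    (g g' : ℝ → ℝ) (ig sg : ℝ)
    (hg_nonneg : ∀ t, 0 ≤ t → 0 ≤ g t)
    (hg_deriv : ∀ t, 0 < t → HasDerivAt g (g' t) t)
    (h_one_le_ig : 1 ≤ ig) (h_ig_le_sg : ig ≤ sg)
    (h_lower : ∀ t, 0 < t → ig * g t ≤ t * g' t)
    (h_upper : ∀ t, 0 < t → t * g' t ≤ sg * g t)
    (Vg : EuclideanSpace ℝ (Fin n) → EuclideanSpace ℝ (Fin n))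
    (hVg_zero : Vg 0 = 0)
    (hVg : ∀ z : EuclideanSpace ℝ (Fin n), z ≠ 0 →
      Vg z = Real.sqrt (g ‖z‖ / ‖z‖) • z) :
    ∃ c₁ c₂ : ℝ, 0 < c₁ ∧ c₁ ≤ c₂ ∧
      ∀ z₁ z₂ : EuclideanSpace ℝ (Fin n), ¬(z₁ = 0 ∧ z₂ = 0) →
        c₁ * (g (‖z₁‖ + ‖z₂‖) / (‖z₁‖ + ‖z₂‖)) * ‖z₁ - z₂‖ ^ 2 ≤
            ‖Vg z₁ - Vg z₂‖ ^ 2 ∧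
          ‖Vg z₁ - Vg z₂‖ ^ 2 ≤
            c₂ * (g (‖z₁‖ + ‖z₂‖) / (‖z₁‖ + ‖z₂‖)) * ‖z₁ - z₂‖ ^ 2 := by
  have hVg_eq : Vg = orliczV g := funext fun z => by
    rcases eq_or_ne z 0 with rfl | hz
    · simp [orliczV, hVg_zero]
    · exact hVg z hz
  have hs : 1 ≤ sg := h_one_le_ig.trans h_ig_le_sg
  have hg : ∀ t, 0 < t → 0 ≤ g t := fun t ht => hg_nonneg t ht.le
  have hmono := monotoneOn_div_self_of_le_mul_deriv hg_deriv fun t ht => by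
    nlinarith [h_lower t ht, hg t ht]
  have hanti := antitoneOn_div_rpow_of_mul_deriv_le hg_deriv h_upper
  have hc₁ : ((3 : ℝ) ^ sg)⁻¹ / 9 ≤ 1 := by
    have : ((3 : ℝ) ^ sg)⁻¹ ≤ 1 := inv_le_one_of_one_le₀ (one_le_rpow (by norm_num) (by linarith))
    linarith
  refine ⟨((3 : ℝ) ^ sg)⁻¹ / 9, sg ^ 2, by positivity, hc₁.trans (by nlinarith), fun z₁ z₂ hz => ?_⟩
  rw [hVg_eq]
  exact orliczV_comparison hs hg hmono hanti hz

/-- If `g` satisfies the Orlicz structure conditions with indices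
`1 ≤ i_g ≤ s_g < ∞` and `V_g(z) = (g(|z|)/|z|)^{1/2}·z` (with `V_g(0) = 0`), then there
are constants `0 < c₁ ≤ c₂` depending only on `n, i_g, s_g` such that for all
`z₁, z₂ ∈ ℝⁿ` not both zero,
`c₁·(g(|z₁|+|z₂|)/(|z₁|+|z₂|))·|z₁−z₂|² ≤ |V_g(z₁) − V_g(z₂)|²
  ≤ c₂·(g(|z₁|+|z₂|)/(|z₁|+|z₂|))·|z₁−z₂|²`. -/
theorem orlicz_Vg_comparison
    (n : ℕ) (hn : 2 ≤ n)
    (g g' : ℝ → ℝ) (ig sg : ℝ)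
    (hg_nonneg : ∀ t, 0 ≤ t → 0 ≤ g t)
    (hg_zero : ∀ t, 0 ≤ t → (g t = 0 ↔ t = 0))
    (hg_deriv : ∀ t, 0 < t → HasDerivAt g (g' t) t)
    (hg'_cont : ContinuousOn g' (Set.Ioi 0))
    (h_one_le_ig : 1 ≤ ig) (h_ig_le_sg : ig ≤ sg)
    (h_lower : ∀ t, 0 < t → ig * g t ≤ t * g' t)
    (h_upper : ∀ t, 0 < t → t * g' t ≤ sg * g t)
    (Vg : EuclideanSpace ℝ (Fin n) → EuclideanSpace ℝ (Fin n))
    (hVg_zero : Vg 0 = 0)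
    (hVg : ∀ z : EuclideanSpace ℝ (Fin n), z ≠ 0 →
      Vg z = Real.sqrt (g ‖z‖ / ‖z‖) • z) :
    ∃ c₁ c₂ : ℝ, 0 < c₁ ∧ c₁ ≤ c₂ ∧
      ∀ z₁ z₂ : EuclideanSpace ℝ (Fin n), ¬(z₁ = 0 ∧ z₂ = 0) →
        c₁ * (g (‖z₁‖ + ‖z₂‖) / (‖z₁‖ + ‖z₂‖)) * ‖z₁ - z₂‖ ^ 2 ≤
            ‖Vg z₁ - Vg z₂‖ ^ 2 ∧
          ‖Vg z₁ - Vg z₂‖ ^ 2 ≤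
            c₂ * (g (‖z₁‖ + ‖z₂‖) / (‖z₁‖ + ‖z₂‖)) * ‖z₁ - z₂‖ ^ 2 :=
  orlicz_Vg_comparison_general n g g' ig sg hg_nonneg hg_deriv h_one_le_ig h_ig_le_sg h_lower
    h_upper Vg hVg_zero hVg
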